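/- In a Saccheri quadrilateral in the hyperbolic plane, the summit is strictly longer than the base: |CD| > |AB|. -/

import Mathlib

/-! We work in the Klein (Beltrami–Klein) model of the hyperbolic plane of
constant curvature −1: points are the open unit ball of `E2` and geodesics are
the Euclidean chords of the ball. `kdist` is the hyperbolic distance and
`kangle a b c` the hyperbolic angle at `b` between the geodesic segments to
`a` and to `c` (via the hyperbolic law of cosines). -/

open Real Metric MeasureTheory

noncomputable section

abbrev E2 := EuclideanSpace ℝ (Fin 2)

/-- Inverse hyperbolic cosine. -/
def arcosh (x : ℝ) : ℝ := Real.log (x + Real.sqrt (x ^ 2 - 1))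

/-- Hyperbolic distance in the Klein model (curvature −1). -/
def kdist (x y : E2) : ℝ :=
  _root_.arcosh ((1 - (inner ℝ x y : ℝ)) / Real.sqrt ((1 - ‖x‖ ^ 2) * (1 - ‖y‖ ^ 2)))

/-- Hyperbolic angle at `b` between the geodesic segments from `b` to `a` and
from `b` to `c`. -/
def kangle (a b c : E2) : ℝ :=
  Real.arccos ((Real.cosh (kdist b a) * Real.cosh (kdist b c) - Real.cosh (kdist a c)) /
    (Real.sinh (kdist b a) * Real.sinh (kdist b c)))

/-- A geodesic line of the Klein model is (the chord of) a one-dimensional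
affine subspace. -/
def IsKleinLine (l : AffineSubspace ℝ E2) : Prop :=
  ∃ x y : E2, x ≠ y ∧ l = affineSpan ℝ {x, y}

/-- The chord of a line: the actual geodesic line of the hyperbolic plane. -/
def chord (l : AffineSubspace ℝ E2) : Set E2 := (l : Set E2) ∩ ball (0 : E2) 1

/-- Hyperbolic distance from a point to a set. -/
def kdistSet (x : E2) (s : Set E2) : ℝ := sInf (kdist x '' s)

/-! Lift the Klein disc to the hyperboloid in Minkowski space `ℝ^{2,1}`: the cosine of the
hyperbolic distance becomes the Minkowski product of the lifts, so the matrix of `cosh` of the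
mutual distances of four points is a Gram matrix of four vectors in a 3-dimensional space and is
singular. By the hyperbolic Pythagorean theorem the right angles at `A` and `B` give
`cosh |BC| = cosh |AD| = p q` with `p = cosh |AC| = cosh |BD|` and `q = cosh |AB|`; the
determinant then factors as `(q² - 1) (r - (p² q + p² - 1)) (r - (p² q - p² + 1))` in
`r = cosh |CD|`, and both roots exceed `q` by `(p² - 1) (q ± 1) > 0`. -/

namespace Klein

def kcosh (x y : E2) : ℝ :=
  (1 - (inner ℝ x y : ℝ)) / √((1 - ‖x‖ ^ 2) * (1 - ‖y‖ ^ 2))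

theorem kdist_eq_arcosh (x y : E2) : kdist x y = Real.arcosh (kcosh x y) := rfl

theorem kcosh_comm (x y : E2) : kcosh x y = kcosh y x := by
  rw [kcosh, kcosh, real_inner_comm, mul_comm]

theorem kdist_comm (x y : E2) : kdist x y = kdist y x := by
  rw [kdist_eq_arcosh, kdist_eq_arcosh, kcosh_comm]

theorem one_sub_norm_sq_pos {x : E2} (hx : x ∈ ball (0 : E2) 1) : 0 < 1 - ‖x‖ ^ 2 := by
  rw [mem_ball_zero_iff] at hx
  nlinarith [norm_nonneg x]

theorem kcosh_self {x : E2} (hx : x ∈ ball (0 : E2) 1) : kcosh x x = 1 := by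
  rw [kcosh, real_inner_self_eq_norm_sq, Real.sqrt_mul_self (one_sub_norm_sq_pos hx).le,
    div_self (one_sub_norm_sq_pos hx).ne']

theorem one_lt_kcosh {x y : E2} (hx : x ∈ ball (0 : E2) 1) (hy : y ∈ ball (0 : E2) 1)
    (hxy : x ≠ y) : 1 < kcosh x y := by
  have hx2 := one_sub_norm_sq_pos hx
  have hy2 := one_sub_norm_sq_pos hy
  have hsub : 0 < ‖x - y‖ ^ 2 := by positivity [sub_ne_zero.mpr hxy]
  rw [norm_sub_sq_real] at hsub
  have hinner : (inner ℝ x y : ℝ) < 1 := by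
    rw [mem_ball_zero_iff] at hx hy
    nlinarith [real_inner_le_norm x y, norm_nonneg x, norm_nonneg y]
  have hlt : (1 - ‖x‖ ^ 2) * (1 - ‖y‖ ^ 2) < (1 - (inner ℝ x y : ℝ)) ^ 2 := by
    nlinarith [sq_nonneg ((inner ℝ x y : ℝ) - ‖y‖ ^ 2), mul_pos hy2 hsub]
  rwa [kcosh, one_lt_div (by positivity), Real.sqrt_lt' (by linarith)]

theorem one_le_kcosh {x y : E2} (hx : x ∈ ball (0 : E2) 1) (hy : y ∈ ball (0 : E2) 1) :
    1 ≤ kcosh x y := by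
  rcases eq_or_ne x y with rfl | hxy
  · exact (kcosh_self hx).ge
  · exact (one_lt_kcosh hx hy hxy).le

theorem cosh_kdist {x y : E2} (hx : x ∈ ball (0 : E2) 1) (hy : y ∈ ball (0 : E2) 1) :
    cosh (kdist x y) = kcosh x y :=
  Real.cosh_arcosh (one_le_kcosh hx hy)

theorem kdist_nonneg {x y : E2} (hx : x ∈ ball (0 : E2) 1) (hy : y ∈ ball (0 : E2) 1) :
    0 ≤ kdist x y :=
  Real.arcosh_nonneg (one_le_kcosh hx hy)

theorem kdist_pos {x y : E2} (hx : x ∈ ball (0 : E2) 1) (hy : y ∈ ball (0 : E2) 1)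
    (hxy : x ≠ y) : 0 < kdist x y :=
  Real.arcosh_pos (one_lt_kcosh hx hy hxy)

theorem kdist_self {x : E2} (hx : x ∈ ball (0 : E2) 1) : kdist x x = 0 := by
  rw [kdist_eq_arcosh, kcosh_self hx, Real.arcosh_zero]

/-- The embedding of the Klein model onto the hyperboloid model: its image consists of unit
vectors for the Minkowski form of signature `minkowskiSign`. -/
def lorentzLift (x : E2) : Fin 3 → ℝ := (√(1 - ‖x‖ ^ 2))⁻¹ • ![x 0, x 1, 1]

def minkowskiSign : Fin 3 → ℝ := ![-1, -1, 1]

theorem kcosh_eq_sum_lorentzLift {x y : E2} (hx : x ∈ ball (0 : E2) 1) :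
    kcosh x y = ∑ k, lorentzLift x k * minkowskiSign k * lorentzLift y k := by
  have hinner : (inner ℝ x y : ℝ) = x 0 * y 0 + x 1 * y 1 := by
    simp [PiLp.inner_apply, Fin.sum_univ_two, mul_comm]
  rw [kcosh, Real.sqrt_mul (one_sub_norm_sq_pos hx).le, hinner]
  simp only [lorentzLift, minkowskiSign, Fin.sum_univ_three, Pi.smul_apply, smul_eq_mul,
    Matrix.cons_val_zero, Matrix.cons_val_one, Matrix.cons_val, mul_neg, mul_one, neg_mul]
  field_simp
  ring

theorem det_mul_mul_transpose_eq_zero {m n K : Type*} [Fintype m] [Fintype n] [DecidableEq m]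
    [Field K] (M : Matrix m n K) (D : Matrix n n K) (h : Fintype.card n < Fintype.card m) :
    (M * D * M.transpose).det = 0 := by
  by_contra hdet
  have hrank := (M * D * M.transpose).rank_of_isUnit
    ((Matrix.isUnit_iff_isUnit_det _).mpr (isUnit_iff_ne_zero.mpr hdet))
  have := (Matrix.rank_mul_le_right (M * D) M.transpose).trans M.transpose.rank_le_card_height
  omega

theorem det_cosh_kdist_eq_zero {ι : Type*} [Fintype ι] [DecidableEq ι] (P : ι → E2)
    (hP : ∀ i, P i ∈ ball (0 : E2) 1) (hcard : 3 < Fintype.card ι) :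
    (Matrix.of fun i j => cosh (kdist (P i) (P j))).det = 0 := by
  have hgram : (Matrix.of fun i j => cosh (kdist (P i) (P j))) =
      Matrix.of (fun i k => lorentzLift (P i) k) * Matrix.diagonal minkowskiSign *
        (Matrix.of fun i k => lorentzLift (P i) k).transpose := by
    ext i j
    rw [Matrix.mul_apply]
    simp [Matrix.mul_diagonal, cosh_kdist (hP i) (hP j), kcosh_eq_sum_lorentzLift (hP i)]
  rw [hgram]
  exact det_mul_mul_transpose_eq_zero _ _ (by simpa using hcard)

theorem cosh_kdist_eq_mul_of_kangle_eq_pi_div_two {a b c : E2} (hba : kdist b a ≠ 0)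
    (hbc : kdist b c ≠ 0) (h : kangle a b c = π / 2) :
    cosh (kdist a c) = cosh (kdist b a) * cosh (kdist b c) := by
  rw [kangle, Real.arccos_eq_pi_div_two, div_eq_zero_iff, sub_eq_zero] at h
  refine (h.resolve_right ?_).symm
  exact mul_ne_zero (Real.sinh_ne_zero.mpr hba) (Real.sinh_ne_zero.mpr hbc)

def saccheriGram (p q r : ℝ) : Matrix (Fin 4) (Fin 4) ℝ :=
  !![1, q, p, p * q; q, 1, p * q, p; p, p * q, 1, r; p * q, p, r, 1]

theorem det_saccheriGram (p q r : ℝ) :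
    (saccheriGram p q r).det =
      (q ^ 2 - 1) * (r - (p ^ 2 * q + p ^ 2 - 1)) * (r - (p ^ 2 * q - p ^ 2 + 1)) := by
  rw [saccheriGram, Matrix.det_succ_row_zero, Fin.sum_univ_four]
  simp only [Nat.succ_eq_add_one, Nat.reduceAdd, Fin.isValue, Fin.coe_ofNat_eq_mod, Nat.zero_mod,
    pow_zero, Matrix.of_apply, Matrix.cons_val', Matrix.cons_val_zero, Matrix.cons_val_fin_one,
    mul_one, Fin.succAbove_zero, Matrix.det_fin_three, Matrix.submatrix_apply, Fin.succ_zero_eq_one,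
    Matrix.cons_val_one, Fin.succ_one_eq_two, Matrix.cons_val, Fin.reduceSucc, one_mul, Nat.one_mod,
    pow_one, neg_mul, Fin.succAbove, Fin.castSucc_zero, zero_lt_one, ↓reduceIte, Fin.castSucc_one,
    lt_self_iff_false, Fin.reduceCastSucc, Fin.lt_one_iff, Fin.reduceEq, Nat.reduceMod, even_two,
    Even.neg_pow, one_pow, Fin.reduceLT, Nat.mod_succ]
  ring

theorem lt_of_det_saccheriGram_eq_zero {p q r : ℝ} (hp : 1 < p) (hq : 1 < q)
    (h : (saccheriGram p q r).det = 0) : q < r := by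
  have hp2 : 0 < p ^ 2 - 1 := by nlinarith
  rw [det_saccheriGram, mul_assoc, mul_eq_zero, mul_eq_zero, sub_eq_zero, sub_eq_zero] at h
  rcases h with h | h | h
  · nlinarith
  · nlinarith [mul_pos hp2 (by linarith : (0 : ℝ) < q + 1)]
  · nlinarith [mul_pos hp2 (by linarith : (0 : ℝ) < q - 1)]

end Klein

open Klein

/-- In a Saccheri quadrilateral of the hyperbolic plane (base `AB`, equal legs
`AC` and `BD` perpendicular to `AB` at `A` and `B` on the same side, summit
`CD`), the summit is strictly longer than the base: `|CD| > |AB|`. -/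
theorem saccheri_quadrilateral_summit_longer_than_base
    (A B C D : E2) (hA : A ∈ ball (0 : E2) 1) (hB : B ∈ ball (0 : E2) 1)
    (hC : C ∈ ball (0 : E2) 1) (hD : D ∈ ball (0 : E2) 1)
    (hAB : A ≠ B)
    (hside : (affineSpan ℝ ({A, B} : Set E2)).SSameSide C D)
    (a1 : kangle C A B = π / 2) (a2 : kangle D B A = π / 2)
    (hlegs : kdist A C = kdist B D) :
    kdist C D > kdist A B := by
  have hAC : A ≠ C := fun h => hside.2.1 (h ▸ subset_affineSpan ℝ _ (by simp))
  have hBD : B ≠ D := fun h => hside.2.2 (h ▸ subset_affineSpan ℝ _ (by simp))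
  set p := cosh (kdist A C)
  set q := cosh (kdist A B)
  have hBC : cosh (kdist B C) = p * q := by
    rw [kdist_comm, cosh_kdist_eq_mul_of_kangle_eq_pi_div_two (kdist_pos hA hC hAC).ne'
      (kdist_pos hA hB hAB).ne' a1]
  have hAD : cosh (kdist A D) = p * q := by
    rw [kdist_comm, cosh_kdist_eq_mul_of_kangle_eq_pi_div_two (kdist_pos hB hD hBD).ne'
      (kdist_pos hB hA hAB.symm).ne' a2, ← hlegs, kdist_comm B A]
  have hgram := det_cosh_kdist_eq_zero ![A, B, C, D]
    (fun i => by fin_cases i <;> assumption) (by simp)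
  have hG : Matrix.of (fun i j => cosh (kdist (![A, B, C, D] i) (![A, B, C, D] j))) =
      saccheriGram p q (cosh (kdist C D)) := by
    ext i j
    fin_cases i <;> fin_cases j <;>
      simp [saccheriGram, kdist_self, hA, hB, hC, hD, kdist_comm B A, kdist_comm C A,
        kdist_comm D A, kdist_comm C B, kdist_comm D B, kdist_comm D C, hBC, hAD, ← hlegs, p, q]
  rw [hG] at hgram
  have hqr := lt_of_det_saccheriGram_eq_zero (one_lt_cosh.mpr (kdist_pos hA hC hAC).ne')
    (one_lt_cosh.mpr (kdist_pos hA hB hAB).ne') hgram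
  rw [cosh_lt_cosh, abs_of_nonneg (kdist_nonneg hA hB), abs_of_nonneg (kdist_nonneg hC hD)] at hqr
  exact hqr
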